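/- Let 0 < a < b and let f : [a,b] → ℝ be continuous on [a,b] and differentiable on (a,b). Let a = x₀ < x₁ < ⋯ < xₙ = b be a partition of [a,b], let ξᵢ ∈ [xᵢ, xᵢ₊₁] for i = 0, …, n−1 be intermediate points, set hᵢ := xᵢ₊₁ − xᵢ, and define the quadrature Sₙ := Σ_{i=0}^{n−1} (f(ξᵢ)/ξᵢ)·((xᵢ + xᵢ₊₁)/2)·hᵢ. Then the remainder Rₙ := ∫ₐᵇ f(t) dt − Sₙ satisfies |Rₙ| ≤ ‖f − ℓf′‖∞ · Σ_{i=0}^{n−1} (hᵢ²/ξᵢ)·[1/4 + ((ξᵢ − (xᵢ + xᵢ₊₁)/2)/hᵢ)²] ≤ (1/2)·‖f − ℓf′‖∞ · Σ_{i=0}^{n−1} hᵢ²/ξᵢ ≤ (‖f − ℓf′‖∞/(2a))·Σ_{i=0}^{n−1} hᵢ². -/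

import Mathlib

/-!
Pompeiu's mean value theorem (Cauchy's mean value theorem for `f u / u` against `1 / u`) gives,
for `0 < s < t`, some `η ∈ (s, t)` with `t f(s) - s f(t) = (f(η) - η f'(η)) (t - s)`. Hence on a
cell `[p, q]` with node `c` the integrand differs from the line `t ↦ f(c) / c * t` by at most
`M / c * |t - c|`; the line integrates to the cell's term of the rule, and
`∫ |t - c| = ((c - p)² + (q - c)²) / 2 = (q - p)² (1/4 + ((c - (p + q)/2) / (q - p))²)`.
The two cruder bounds follow from `|c - (p + q)/2| ≤ (q - p)/2` and `c ≥ a`.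
-/

open Set intervalIntegral

theorem exists_pompeiu_mean_value {f : ℝ → ℝ} {s t : ℝ} (hs : 0 < s) (hst : s < t)
    (hf : ContinuousOn f (Icc s t)) (hd : DifferentiableOn ℝ f (Ioo s t)) :
    ∃ η ∈ Ioo s t, t * f s - s * f t = (f η - η * deriv f η) * (t - s) := by
  have hpos : ∀ u ∈ Icc s t, u ≠ 0 := fun u hu => (hs.trans_le hu.1).ne'
  have hderiv : ∀ u ∈ Ioo s t,
      HasDerivAt (fun u => f u / u) ((deriv f u * u - f u) / u ^ 2) u := fun u hu => by
    simpa using ((hd u hu).differentiableAt (isOpen_Ioo.mem_nhds hu)).hasDerivAt.fun_div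
      (hasDerivAt_id' u) (hpos u (Ioo_subset_Icc_self hu))
  obtain ⟨η, hη, hmvt⟩ := exists_ratio_hasDerivAt_eq_ratio_slope (fun u => f u / u) _ hst
    (hf.div continuousOn_id hpos) hderiv (fun u => u⁻¹) (fun u => -(u ^ 2)⁻¹)
    (continuousOn_inv₀.mono hpos) (fun u hu => hasDerivAt_inv (hpos u (Ioo_subset_Icc_self hu)))
  refine ⟨η, hη, ?_⟩
  have hη0 := hpos η (Ioo_subset_Icc_self hη)
  have ht0 := hpos t (right_mem_Icc.2 hst.le)
  field_simp at hmvt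
  linear_combination -hmvt

theorem integral_abs_sub_eq {p q c : ℝ} (hc : c ∈ Icc p q) :
    ∫ t in p..q, |t - c| = ((c - p) ^ 2 + (q - c) ^ 2) / 2 := by
  have hint : ∀ u v : ℝ, IntervalIntegrable (fun t => |t - c|) MeasureTheory.volume u v :=
    fun u v => (continuous_id.sub continuous_const).abs.intervalIntegrable u v
  have hleft := integral_pow_abs_sub_uIoc (a := c) (b := p) (n := 1)
  have hright := integral_pow_abs_sub_uIoc (a := c) (b := q) (n := 1)
  rw [uIoc_of_ge hc.1, ← integral_of_le hc.1] at hleft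
  rw [uIoc_of_le hc.2, ← integral_of_le hc.2] at hright
  simp only [pow_one] at hleft hright
  rw [← integral_add_adjacent_intervals (hint p c) (hint c q), hleft, hright, abs_sub_comm,
    abs_of_nonneg (sub_nonneg.2 hc.1), abs_of_nonneg (sub_nonneg.2 hc.2)]
  ring

theorem abs_mul_sub_mul_le_of_pompeiu {f : ℝ → ℝ} {p q M s t : ℝ} (hp : 0 < p)
    (hf : ContinuousOn f (Icc p q)) (hd : DifferentiableOn ℝ f (Ioo p q))
    (hM : ∀ η ∈ Ioo p q, |f η - η * deriv f η| ≤ M) (hs : s ∈ Icc p q) (ht : t ∈ Icc p q) :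
    |t * f s - s * f t| ≤ M * |t - s| := by
  wlog hst : s ≤ t generalizing s t
  · rw [abs_sub_comm, abs_sub_comm t]
    exact this ht hs (le_of_not_ge hst)
  rcases hst.eq_or_lt with rfl | hst
  · simp
  have hsub : Ioo s t ⊆ Ioo p q := Ioo_subset_Ioo hs.1 ht.2
  obtain ⟨η, hη, heq⟩ := exists_pompeiu_mean_value (hp.trans_le hs.1) hst
    (hf.mono (Icc_subset_Icc hs.1 ht.2)) (hd.mono hsub)
  rw [heq, abs_mul]
  exact mul_le_mul_of_nonneg_right (hM η (hsub hη)) (abs_nonneg _)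

theorem abs_integral_sub_pompeiu_rule_le {f : ℝ → ℝ} {p q M c : ℝ} (hp : 0 < p) (hpq : p < q)
    (hf : ContinuousOn f (Icc p q)) (hd : DifferentiableOn ℝ f (Ioo p q))
    (hM : ∀ η ∈ Ioo p q, |f η - η * deriv f η| ≤ M) (hc : c ∈ Icc p q) :
    |(∫ t in p..q, f t) - f c / c * ((p + q) / 2) * (q - p)| ≤
      M * ((q - p) ^ 2 / c * (1 / 4 + ((c - (p + q) / 2) / (q - p)) ^ 2)) := by
  have hc0 : 0 < c := hp.trans_le hc.1
  have hlin : IntervalIntegrable (fun t => f c / c * t) MeasureTheory.volume p q :=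
    (continuous_const.mul continuous_id).intervalIntegrable p q
  have hrule : ∫ t in p..q, f c / c * t = f c / c * ((p + q) / 2) * (q - p) := by
    rw [integral_const_mul, integral_id]
    ring
  have hpointwise : ∀ t ∈ Icc p q, |f t - f c / c * t| ≤ M / c * |t - c| := by
    intro t ht
    have key := abs_mul_sub_mul_le_of_pompeiu hp hf hd hM ht hc
    rw [show f t - f c / c * t = (c * f t - t * f c) / c by field_simp, abs_div,
      abs_of_pos hc0, abs_sub_comm t]
    exact (div_le_div_iff_of_pos_right hc0).2 key |>.trans_eq (by ring)
  calc |(∫ t in p..q, f t) - f c / c * ((p + q) / 2) * (q - p)|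
      = |∫ t in p..q, (f t - f c / c * t)| := by
        rw [integral_sub (hf.intervalIntegrable_of_Icc hpq.le) hlin, hrule]
    _ ≤ ∫ t in p..q, M / c * |t - c| :=
        (Real.norm_eq_abs _).symm.trans_le <| norm_integral_le_of_norm_le hpq.le
          (.of_forall fun t ht => hpointwise t (Ioc_subset_Icc_self ht))
          (Continuous.intervalIntegrable (u := fun t => M / c * |t - c|) (by fun_prop) p q)
    _ = M * ((q - p) ^ 2 / c * (1 / 4 + ((c - (p + q) / 2) / (q - p)) ^ 2)) := by
        rw [integral_const_mul, integral_abs_sub_eq hc]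
        field_simp [(sub_pos.2 hpq).ne']
        ring

theorem mem_Icc_of_forall_le_succ {α : Type*} [Preorder α] {x : ℕ → α} {n i : ℕ}
    (hmono : ∀ i < n, x i ≤ x (i + 1)) (hi : i ≤ n) : x i ∈ Icc (x 0) (x n) := by
  have hx : MonotoneOn x (Iic n) := monotoneOn_of_le_add_one ordConnected_Iic
    fun j _ _ hj => hmono j (Nat.lt_of_succ_le hj)
  exact ⟨hx (Nat.zero_le n) hi (Nat.zero_le i), hx hi (mem_Iic.2 le_rfl) hi⟩

theorem quarter_add_sq_div_le_half {p q c : ℝ} (hc : c ∈ Icc p q) :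
    1 / 4 + ((c - (p + q) / 2) / (q - p)) ^ 2 ≤ 1 / 2 := by
  rcases (hc.1.trans hc.2).eq_or_lt with rfl | hpq
  · norm_num
  have hsq : (c - (p + q) / 2) ^ 2 / (q - p) ^ 2 ≤ 1 / 4 := by
    rw [div_le_iff₀ (by nlinarith)]
    nlinarith [hc.1, hc.2]
  rw [div_pow]
  linarith

theorem abs_integral_sub_sum_pompeiu_rule_le {f : ℝ → ℝ} {x ξ : ℕ → ℝ} {n : ℕ} {M : ℝ}
    (hx0 : 0 < x 0) (hmono : ∀ i < n, x i < x (i + 1))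
    (hξ : ∀ i < n, ξ i ∈ Icc (x i) (x (i + 1)))
    (hf : ContinuousOn f (Icc (x 0) (x n))) (hd : DifferentiableOn ℝ f (Ioo (x 0) (x n)))
    (hM : ∀ η ∈ Ioo (x 0) (x n), |f η - η * deriv f η| ≤ M) :
    |(∫ t in x 0..x n, f t) -
        ∑ i ∈ Finset.range n, f (ξ i) / ξ i * ((x i + x (i + 1)) / 2) * (x (i + 1) - x i)| ≤
      M * ∑ i ∈ Finset.range n,
        (x (i + 1) - x i) ^ 2 / ξ i *
          (1 / 4 + ((ξ i - (x i + x (i + 1)) / 2) / (x (i + 1) - x i)) ^ 2) := by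
  have hIcc : ∀ i < n, Icc (x i) (x (i + 1)) ⊆ Icc (x 0) (x n) := fun i hi =>
    Icc_subset_Icc (mem_Icc_of_forall_le_succ (fun j hj => (hmono j hj).le) hi.le).1
      (mem_Icc_of_forall_le_succ (fun j hj => (hmono j hj).le) hi).2
  have hIoo : ∀ i < n, Ioo (x i) (x (i + 1)) ⊆ Ioo (x 0) (x n) := fun i hi =>
    Ioo_subset_Ioo (hIcc i hi (left_mem_Icc.2 (hmono i hi).le)).1
      (hIcc i hi (right_mem_Icc.2 (hmono i hi).le)).2
  rw [← sum_integral_adjacent_intervals fun i hi =>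
      (hf.mono (hIcc i hi)).intervalIntegrable_of_Icc (hmono i hi).le,
    ← Finset.sum_sub_distrib, Finset.mul_sum]
  refine (Finset.abs_sum_le_sum_abs _ _).trans (Finset.sum_le_sum fun i hi => ?_)
  rw [Finset.mem_range] at hi
  exact abs_integral_sub_pompeiu_rule_le
    (hx0.trans_le (hIcc i hi (left_mem_Icc.2 (hmono i hi).le)).1) (hmono i hi)
    (hf.mono (hIcc i hi)) (hd.mono (hIoo i hi)) (fun η hη => hM η (hIoo i hi hη)) (hξ i hi)

/-- Theorem 5.1: error estimate for the quadrature rule built on Pompeiu's inequality. -/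
theorem pompeiu_quadrature (a b : ℝ) (f : ℝ → ℝ)
    (ha : 0 < a) (hab : a < b)
    (hf : ContinuousOn f (Set.Icc a b))
    (hd : DifferentiableOn ℝ f (Set.Ioo a b))
    (hbdd : BddAbove ((fun ξ => |f ξ - ξ * deriv f ξ|) '' Set.Ioo a b))
    (n : ℕ) (x ξ : ℕ → ℝ)
    (hx0 : x 0 = a) (hxn : x n = b)
    (hmono : ∀ i < n, x i < x (i + 1))
    (hξ : ∀ i < n, ξ i ∈ Set.Icc (x i) (x (i + 1))) :
    |(∫ t in a..b, f t) -
        ∑ i ∈ Finset.range n,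
          f (ξ i) / ξ i * ((x i + x (i + 1)) / 2) * (x (i + 1) - x i)| ≤
      sSup ((fun ξ => |f ξ - ξ * deriv f ξ|) '' Set.Ioo a b) *
        ∑ i ∈ Finset.range n,
          (x (i + 1) - x i) ^ 2 / ξ i *
            (1 / 4 + ((ξ i - (x i + x (i + 1)) / 2) / (x (i + 1) - x i)) ^ 2) ∧
    sSup ((fun ξ => |f ξ - ξ * deriv f ξ|) '' Set.Ioo a b) *
        ∑ i ∈ Finset.range n,
          (x (i + 1) - x i) ^ 2 / ξ i *
            (1 / 4 + ((ξ i - (x i + x (i + 1)) / 2) / (x (i + 1) - x i)) ^ 2) ≤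
      1 / 2 * sSup ((fun ξ => |f ξ - ξ * deriv f ξ|) '' Set.Ioo a b) *
        ∑ i ∈ Finset.range n, (x (i + 1) - x i) ^ 2 / ξ i ∧
    1 / 2 * sSup ((fun ξ => |f ξ - ξ * deriv f ξ|) '' Set.Ioo a b) *
        ∑ i ∈ Finset.range n, (x (i + 1) - x i) ^ 2 / ξ i ≤
      sSup ((fun ξ => |f ξ - ξ * deriv f ξ|) '' Set.Ioo a b) / (2 * a) *
        ∑ i ∈ Finset.range n, (x (i + 1) - x i) ^ 2 := by
  set M := sSup ((fun ξ => |f ξ - ξ * deriv f ξ|) '' Set.Ioo a b)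
  have hM : ∀ η ∈ Ioo a b, |f η - η * deriv f η| ≤ M := fun η hη =>
    le_csSup hbdd (mem_image_of_mem _ hη)
  have hM0 : 0 ≤ M := (abs_nonneg _).trans
    (hM _ ⟨left_lt_add_div_two.2 hab, add_div_two_lt_right.2 hab⟩)
  have haξ : ∀ i < n, a ≤ ξ i := fun i hi =>
    hx0 ▸ (mem_Icc_of_forall_le_succ (fun j hj => (hmono j hj).le) hi.le).1.trans (hξ i hi).1
  refine ⟨?_, ?_, ?_⟩
  · subst hx0 hxn
    exact abs_integral_sub_sum_pompeiu_rule_le ha hmono hξ hf hd hM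
  · rw [mul_comm (1 / 2 : ℝ) M, mul_assoc, Finset.mul_sum (Finset.range n) _ (1 / 2)]
    refine mul_le_mul_of_nonneg_left (Finset.sum_le_sum fun i hi => ?_) hM0
    rw [Finset.mem_range] at hi
    exact (mul_le_mul_of_nonneg_left (quarter_add_sq_div_le_half (hξ i hi))
      (div_nonneg (sq_nonneg _) (ha.trans_le (haξ i hi)).le)).trans_eq (mul_comm _ _)
  · rw [Finset.mul_sum, Finset.mul_sum]
    refine Finset.sum_le_sum fun i hi => ?_
    calc 1 / 2 * M * ((x (i + 1) - x i) ^ 2 / ξ i)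
        ≤ 1 / 2 * M * ((x (i + 1) - x i) ^ 2 / a) := by
          gcongr
          exact haξ i (Finset.mem_range.1 hi)
      _ = M / (2 * a) * (x (i + 1) - x i) ^ 2 := by ring
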